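/- Let α > 1, β₁, β₂ > 0, s > 0, L > 0, and p, q ∈ ℝ. Suppose ψ'' ≥ 0 satisfies ψ'' ≤ β₁β₂/s (using β₁ + β₂ = 2). Then the quantity E := −α(α−1)·L·s² + 2·((α−1)β₁ + αβ₂)/s · (p² + q²) + α·ψ''·((β₁+β₂)²/β₁²)·p² − (α−1)·ψ''·((β₁+β₂)²/β₂²)·q² − 2·((α−1)β₁ + αβ₂)/s · ( ((α−1)β₁ + αβ₂)/((α−1)β₁)·p² + ((α−1)β₁ + αβ₂)/(αβ₂)·q² ) is strictly negative, where L = β₁λ₁ + β₂λ₂ > 0. -/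
import Mathlib

theorem stmt_7 (α β₁ β₂ s L p q ψ'' lam₁ lam₂ : ℝ)
    (hα : 1 < α) (hβ₁ : 0 < β₁) (hβ₁₂ : β₁ ≤ β₂) (hβsum : β₁ + β₂ = 2)
    (hs : 0 < s) (hslam : s = lam₁ - lam₂)
    (hL : L = β₁ * lam₁ + β₂ * lam₂) (hLpos : 0 < L)
    (hψ''0 : 0 ≤ ψ'') (hψ'' : ψ'' ≤ β₁ * β₂ / s) :
    -α * (α - 1) * L * s ^ 2
      + 2 * ((α - 1) * β₁ + α * β₂) / s * (p ^ 2 + q ^ 2)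
      + α * ψ'' * ((β₁ + β₂) ^ 2 / β₁ ^ 2) * p ^ 2
      - (α - 1) * ψ'' * ((β₁ + β₂) ^ 2 / β₂ ^ 2) * q ^ 2
      - 2 * ((α - 1) * β₁ + α * β₂) / s *
          (((α - 1) * β₁ + α * β₂) / ((α - 1) * β₁) * p ^ 2
            + ((α - 1) * β₁ + α * β₂) / (α * β₂) * q ^ 2) < 0 := by
  have hβ₂ : 0 < β₂ := lt_of_lt_of_le hβ₁ hβ₁₂
  have hα1 : (0:ℝ) < α - 1 := by linarith
  have hα0 : (0:ℝ) < α := by linarith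
  have hψs : ψ'' * s ≤ β₁ * β₂ := by
    rw [le_div_iff₀ hs] at hψ''; linarith
  set A := (α - 1) * β₁ + α * β₂ with hAdef
  have hA : 0 < A := by positivity
  set Cp := 2 * A / s + α * ψ'' * ((β₁ + β₂) ^ 2 / β₁ ^ 2)
      - 2 * A / s * (A / ((α - 1) * β₁)) with hCpdef
  set Cq := 2 * A / s - (α - 1) * ψ'' * ((β₁ + β₂) ^ 2 / β₂ ^ 2)
      - 2 * A / s * (A / (α * β₂)) with hCqdef
  have hCp : Cp ≤ 0 := by
    have hD : (0:ℝ) < s * β₁ ^ 2 * ((α - 1) * β₁) := by positivity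
    have heq : Cp = (2 * A * ((α - 1) * β₁ - A) * β₁ ^ 2
        + α * ψ'' * (β₁ + β₂) ^ 2 * s * ((α - 1) * β₁)) / (s * β₁ ^ 2 * ((α - 1) * β₁)) := by
      rw [hCpdef]; field_simp; ring
    rw [heq]
    apply div_nonpos_of_nonpos_of_nonneg _ (le_of_lt hD)
    have h4 : (β₁ + β₂) ^ 2 = 4 := by rw [hβsum]; norm_num
    rw [h4, hAdef]
    have hst := mul_le_mul_of_nonneg_left hψs
      (show (0:ℝ) ≤ 4 * α * ((α - 1) * β₁) by positivity)
    have key : 2 * ((α - 1) * β₁ + α * β₂) * ((α - 1) * β₁ - ((α - 1) * β₁ + α * β₂)) * β₁ ^ 2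
        + 4 * α * ((α - 1) * β₁) * (β₁ * β₂) = -2 * α * β₂ ^ 2 * β₁ ^ 2 := by
      have h2 : β₂ = 2 - β₁ := by linarith
      rw [h2]; ring
    have hpos : (0:ℝ) ≤ 2 * α * β₂ ^ 2 * β₁ ^ 2 := by positivity
    nlinarith [hst, key, hpos]
  have hCq : Cq ≤ 0 := by
    have hD : (0:ℝ) < s * β₂ ^ 2 * (α * β₂) := by positivity
    have heq : Cq = (2 * A * (α * β₂ - A) * β₂ ^ 2
        - (α - 1) * ψ'' * (β₁ + β₂) ^ 2 * s * (α * β₂)) / (s * β₂ ^ 2 * (α * β₂)) := by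
      rw [hCqdef]; field_simp; ring
    rw [heq]
    apply div_nonpos_of_nonpos_of_nonneg _ (le_of_lt hD)
    have h4 : (β₁ + β₂) ^ 2 = 4 := by rw [hβsum]; norm_num
    rw [h4, hAdef]
    have key : 2 * ((α - 1) * β₁ + α * β₂) * (α * β₂ - ((α - 1) * β₁ + α * β₂)) * β₂ ^ 2
        = -(2 * ((α - 1) * β₁ + α * β₂) * ((α - 1) * β₁) * β₂ ^ 2) := by ring
    have h1 : (0:ℝ) ≤ 2 * ((α - 1) * β₁ + α * β₂) * ((α - 1) * β₁) * β₂ ^ 2 := by positivity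
    have h2 : (0:ℝ) ≤ (α - 1) * ψ'' * 4 * s * (α * β₂) := by positivity
    nlinarith [key, h1, h2]
  have hmain : -α * (α - 1) * L * s ^ 2
      + 2 * A / s * (p ^ 2 + q ^ 2)
      + α * ψ'' * ((β₁ + β₂) ^ 2 / β₁ ^ 2) * p ^ 2
      - (α - 1) * ψ'' * ((β₁ + β₂) ^ 2 / β₂ ^ 2) * q ^ 2
      - 2 * A / s * (A / ((α - 1) * β₁) * p ^ 2 + A / (α * β₂) * q ^ 2)
      = -α * (α - 1) * L * s ^ 2 + Cp * p ^ 2 + Cq * q ^ 2 := by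
    rw [hCpdef, hCqdef]; ring
  rw [hmain]
  have h1 : Cp * p ^ 2 ≤ 0 := mul_nonpos_of_nonpos_of_nonneg hCp (sq_nonneg p)
  have h2 : Cq * q ^ 2 ≤ 0 := mul_nonpos_of_nonpos_of_nonneg hCq (sq_nonneg q)
  have h3 : 0 < α * (α - 1) * L * s ^ 2 := by positivity
  linarith
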